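/- Let x_1, x_2, x_3, x_4 be points (not necessarily distinct) such that E[N(x_i)²] < ∞ for i = 1,…,4. Then the product h(x_1)h(x_2)h(x_3)h(x_4) is integrable and E[h(x_1)h(x_2)h(x_3)h(x_4)] = E[ N(x_1,x_2)N(x_3,x_4) + N(x_1,x_3)N(x_2,x_4) + N(x_1,x_4)N(x_2,x_3) − 2·N(x_1,x_2,x_3,x_4) ]. -/

import Mathlib

/-!
Given the loops, each height is a sum of independent fair signs, and
`E[s_a s_b s_c s_d]` is `1` when `a, b, c, d` match up in pairs and `0` otherwise. Summing this
over `S x₁ × S x₂ × S x₃ × S x₄` counts the pairings, which gives the nesting combination; the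
`- 2 N(x₁,x₂,x₃,x₄)` corrects the threefold count of `a = b = c = d`. Independence of loops and
signs lets one freeze the loops (Fubini for the joint law, which is a product measure).
Integrability comes from `|h₁h₂h₃h₄| ≤ (h₁⁴ + h₂⁴ + h₃⁴ + h₄⁴)/4` and `E[h_t⁴] = 3|t|² - 2|t|`.
-/

open MeasureTheory ProbabilityTheory

/-- The finite sets of loops (`Finset Γ`) carry the discrete (`⊤`) sigma-algebra. -/
instance (priority := low) loopSigmaAlgebra (Γ : Type*) : MeasurableSpace (Finset Γ) := ⊤

open Finset

namespace ProbabilityTheory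

variable {Ω α β : Type*} [MeasurableSpace Ω] [MeasurableSpace α] [MeasurableSpace β]
  {μ : Measure Ω} [IsFiniteMeasure μ] {X : Ω → α} {Y : Ω → β} {F : α × β → ℝ}

lemma IndepFun.integrable_comp_of_integral_norm_le (hXY : IndepFun X Y μ) (hX : Measurable X)
    (hY : Measurable Y) (hF : Measurable F) (hFint : ∀ a, Integrable (fun ω => F (a, Y ω)) μ)
    {B : α → ℝ} (hB : Measurable B) (hBint : Integrable (fun ω => B (X ω)) μ)
    (hFB : ∀ a, ∫ ω, ‖F (a, Y ω)‖ ∂μ ≤ B a) :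
    Integrable (fun ω => F (X ω, Y ω)) μ := by
  refine Integrable.comp_measurable (g := F) ?_ (hX.prodMk hY)
  rw [(indepFun_iff_map_prod_eq_prod_map_map hX.aemeasurable hY.aemeasurable).1 hXY,
    integrable_prod_iff hF.aestronglyMeasurable]
  refine ⟨.of_forall fun a => ?_, ?_⟩
  · exact (integrable_map_measure (hF.comp measurable_prodMk_left).aestronglyMeasurable
      hY.aemeasurable).2 (hFint a)
  · refine ((integrable_map_measure hB.aestronglyMeasurable hX.aemeasurable).2 hBint).mono'
      hF.norm.stronglyMeasurable.integral_prod_right'.aestronglyMeasurable (.of_forall fun a => ?_)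
    rw [Real.norm_of_nonneg (integral_nonneg fun _ => norm_nonneg _),
      integral_map (f := fun b => ‖F (a, b)‖) hY.aemeasurable
        (hF.comp measurable_prodMk_left).norm.aestronglyMeasurable]
    exact hFB a

lemma IndepFun.integral_comp_eq_integral_integral (hXY : IndepFun X Y μ) (hX : Measurable X)
    (hY : Measurable Y) (hF : Measurable F) (hint : Integrable (fun ω => F (X ω, Y ω)) μ) :
    ∫ ω, F (X ω, Y ω) ∂μ = ∫ ω, ∫ ω', F (X ω, Y ω') ∂μ ∂μ := by
  have hmap := (indepFun_iff_map_prod_eq_prod_map_map hX.aemeasurable hY.aemeasurable).1 hXY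
  rw [← integral_map (hX.prodMk hY).aemeasurable hF.aestronglyMeasurable, hmap,
    integral_prod _ (by rwa [← hmap, integrable_map_measure hF.aestronglyMeasurable
      (hX.prodMk hY).aemeasurable]),
    integral_map hX.aemeasurable hF.stronglyMeasurable.integral_prod_right'.aestronglyMeasurable]
  congr with ω
  exact integral_map hY.aemeasurable (hF.comp measurable_prodMk_left).aestronglyMeasurable

end ProbabilityTheory

section Sign

variable {Ω : Type*} [MeasurableSpace Ω] {μ : Measure Ω} {f : Ω → ℝ}

lemma ae_mul_self_eq_one (hpm : ∀ᵐ ω ∂μ, f ω = 1 ∨ f ω = -1) :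
    ∀ᵐ ω ∂μ, f ω * f ω = 1 := by
  filter_upwards [hpm] with ω hω
  rcases hω with hω | hω <;> simp [hω]

variable [IsProbabilityMeasure μ]

lemma ae_eq_one_or_eq_neg_one_of_measure_eq_half (hf : Measurable f)
    (h₁ : μ {ω | f ω = 1} = 1 / 2) (h₂ : μ {ω | f ω = -1} = 1 / 2) :
    ∀ᵐ ω ∂μ, f ω = 1 ∨ f ω = -1 := by
  have hdisj : Disjoint {ω | f ω = 1} {ω | f ω = -1} :=
    Set.disjoint_left.2 fun ω h h' => by rw [Set.mem_ofPred_eq] at h h'; linarith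
  rw [ae_iff_prob_eq_one (by fun_prop), Set.ofPred_or,
    measure_union hdisj (hf (measurableSet_singleton _)), h₁, h₂, ENNReal.add_halves]

lemma integral_eq_zero_of_measure_eq_half (hf : Measurable f)
    (hpm : ∀ᵐ ω ∂μ, f ω = 1 ∨ f ω = -1)
    (h₁ : μ {ω | f ω = 1} = 1 / 2) (h₂ : μ {ω | f ω = -1} = 1 / 2) :
    ∫ ω, f ω ∂μ = 0 := by
  have hA : MeasurableSet {ω | f ω = 1} := hf (measurableSet_singleton _)
  have hB : MeasurableSet {ω | f ω = -1} := hf (measurableSet_singleton _)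
  have hf' : f =ᵐ[μ] fun ω => {ω | f ω = 1}.indicator 1 ω - {ω | f ω = -1}.indicator 1 ω := by
    filter_upwards [hpm] with ω hω
    rcases hω with hω | hω <;> norm_num [Set.indicator, hω]
  rw [integral_congr_ae hf',
    integral_sub ((integrable_indicator_iff hA).2 (integrable_const _).integrableOn)
      ((integrable_indicator_iff hB).2 (integrable_const _).integrableOn),
    integral_indicator_one hA, integral_indicator_one hB, measureReal_def, measureReal_def,
    h₁, h₂, sub_self]

end Sign

section Rademacher

variable {Ω Γ : Type*} [MeasurableSpace Ω] {μ : Measure Ω} {s : Γ → Ω → ℝ}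
  (hs : ∀ γ, Measurable (s γ)) (hpm : ∀ γ, ∀ᵐ ω ∂μ, s γ ω = 1 ∨ s γ ω = -1)
  (hmean : ∀ γ, ∫ ω, s γ ω ∂μ = 0) (hind : iIndepFun s μ)

include hs hmean hind in
lemma integral_mul_eq_zero_of_notMem {a : Γ} {T : Finset Γ} (ha : a ∉ T) {g : (T → ℝ) → ℝ}
    (hg : Measurable g) : ∫ ω, s a ω * g (fun γ => s γ ω) ∂μ = 0 := by
  have hindep := (hind.indepFun_finset {a} T (disjoint_singleton_left.2 ha) hs).comp
    (measurable_pi_apply ⟨a, mem_singleton_self a⟩) hg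
  have := hindep.integral_fun_mul_eq_mul_integral (by fun_prop)
    (hg.comp (measurable_pi_lambda _ fun γ => hs γ)).aestronglyMeasurable
  simpa [hmean] using this

variable [IsProbabilityMeasure μ]

include hs hpm in
lemma integrable_mul_mul_mul (a b c d : Γ) :
    Integrable (fun ω => s a ω * s b ω * s c ω * s d ω) μ := by
  refine Integrable.of_bound (by fun_prop) 1 ?_
  filter_upwards [hpm a, hpm b, hpm c, hpm d] with ω ha hb hc hd
  simp [(abs_eq zero_le_one).2 ha, (abs_eq zero_le_one).2 hb, (abs_eq zero_le_one).2 hc,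
    (abs_eq zero_le_one).2 hd]

include hs hpm hmean hind

lemma integral_mul_eq_ite [DecidableEq Γ] (a b : Γ) :
    ∫ ω, s a ω * s b ω ∂μ = if a = b then 1 else 0 := by
  split_ifs with hab
  · subst hab
    rw [integral_congr_ae (ae_mul_self_eq_one (hpm a)), integral_const, probReal_univ, one_smul]
  · exact integral_mul_eq_zero_of_notMem hs hmean hind (T := {b}) (by simpa using hab)
      (measurable_pi_apply ⟨b, mem_singleton_self b⟩)

lemma integral_mul_self_mul_mul [DecidableEq Γ] (a c d : Γ) :
    ∫ ω, s a ω * s a ω * s c ω * s d ω ∂μ = if c = d then 1 else 0 := by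
  rw [← integral_mul_eq_ite hs hpm hmean hind]
  refine integral_congr_ae ?_
  filter_upwards [ae_mul_self_eq_one (hpm a)] with ω hω
  rw [mul_assoc, hω, one_mul]

lemma integral_mul_mul_mul_eq_ite [DecidableEq Γ] (a b c d : Γ) :
    ∫ ω, s a ω * s b ω * s c ω * s d ω ∂μ
      = if (a = b ∧ c = d) ∨ (a = c ∧ b = d) ∨ (a = d ∧ b = c) then 1 else 0 := by
  by_cases hab : a = b
  · subst hab
    rw [integral_mul_self_mul_mul hs hpm hmean hind]
    grind
  by_cases hac : a = c
  · subst hac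
    simp_rw [mul_right_comm (s a _) (s b _) (s a _)]
    rw [integral_mul_self_mul_mul hs hpm hmean hind]
    grind
  by_cases had : a = d
  · subst had
    have hcomm : ∀ ω, s a ω * s b ω * s c ω * s a ω = s a ω * s a ω * s b ω * s c ω :=
      fun ω => by ring
    simp_rw [hcomm]
    rw [integral_mul_self_mul_mul hs hpm hmean hind]
    grind
  rw [if_neg (by tauto)]
  simpa [mul_assoc] using integral_mul_eq_zero_of_notMem hs hmean hind (T := {b, c, d})
    (by simp [hab, hac, had]) (g := fun y => y ⟨b, by simp⟩ * y ⟨c, by simp⟩ * y ⟨d, by simp⟩)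
    (by fun_prop)

end Rademacher

lemma abs_mul_mul_mul_le (a b c d : ℝ) : |a * b * c * d| ≤ (a ^ 4 + b ^ 4 + c ^ 4 + d ^ 4) / 4 := by
  refine abs_le.2 ⟨?_, ?_⟩ <;>
    nlinarith [sq_nonneg (a ^ 2 - b ^ 2), sq_nonneg (c ^ 2 - d ^ 2), sq_nonneg (a * b + c * d),
      sq_nonneg (a * b - c * d)]

section FourPoint

variable {Γ : Type*}

lemma sum_mul_sum_mul_sum_mul_sum {R : Type*} [CommSemiring R] (f : Γ → R)
    (t₁ t₂ t₃ t₄ : Finset Γ) :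
    (∑ γ ∈ t₁, f γ) * (∑ γ ∈ t₂, f γ) * (∑ γ ∈ t₃, f γ) * (∑ γ ∈ t₄, f γ)
      = ∑ p ∈ t₁ ×ˢ t₂ ×ˢ t₃ ×ˢ t₄, f p.1 * f p.2.1 * f p.2.2.1 * f p.2.2.2 := by
  simp_rw [sum_product, mul_assoc, sum_mul, mul_sum]

variable [DecidableEq Γ]

def fourPointNesting (t₁ t₂ t₃ t₄ : Finset Γ) : ℝ :=
  #(t₁ ∩ t₂) * #(t₃ ∩ t₄) + #(t₁ ∩ t₃) * #(t₂ ∩ t₄) + #(t₁ ∩ t₄) * #(t₂ ∩ t₃)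
    - 2 * #(t₁ ∩ t₂ ∩ t₃ ∩ t₄)

lemma ite_pairing_eq (a b c d : Γ) :
    (if (a = b ∧ c = d) ∨ (a = c ∧ b = d) ∨ (a = d ∧ b = c) then (1 : ℝ) else 0)
      = (if a = b then 1 else 0) * (if c = d then 1 else 0)
        + (if a = c then 1 else 0) * (if b = d then 1 else 0)
        + (if a = d then 1 else 0) * (if b = c then 1 else 0)
        - 2 * ((if a = b then 1 else 0) * (if a = c then 1 else 0) * (if a = d then 1 else 0)) := by
  split_ifs <;> grind

lemma sum_ite_pairing_eq_fourPointNesting (t₁ t₂ t₃ t₄ : Finset Γ) :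
    ∑ a ∈ t₁, ∑ b ∈ t₂, ∑ c ∈ t₃, ∑ d ∈ t₄,
        (if (a = b ∧ c = d) ∨ (a = c ∧ b = d) ∨ (a = d ∧ b = c) then (1 : ℝ) else 0)
      = fourPointNesting t₁ t₂ t₃ t₄ := by
  simp [fourPointNesting, ite_pairing_eq, sum_add_distrib, sum_sub_distrib, ite_mul, sum_ite_irrel,
    inter_left_comm, inter_comm, mul_comm]

lemma fourPointNesting_self (t : Finset Γ) : fourPointNesting t t t t = 3 * #t ^ 2 - 2 * #t := by
  simp only [fourPointNesting, inter_self]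
  ring

end FourPoint

lemma measurable_finsetSum_apply {Γ : Type*} [Countable Γ] :
    Measurable fun p : Finset Γ × (Γ → ℝ) => ∑ γ ∈ p.1, p.2 γ :=
  measurable_from_prod_countable_right fun _ => measurable_sum _ fun γ _ => measurable_pi_apply γ

section FixedLoops

variable {Ω Γ : Type*} [MeasurableSpace Ω] {μ : Measure Ω} [IsProbabilityMeasure μ]
  {s : Γ → Ω → ℝ} (hs : ∀ γ, Measurable (s γ)) (hpm : ∀ γ, ∀ᵐ ω ∂μ, s γ ω = 1 ∨ s γ ω = -1)
  (hmean : ∀ γ, ∫ ω, s γ ω ∂μ = 0) (hind : iIndepFun s μ)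
include hs hpm

lemma integrable_sum_mul_sum_mul_sum_mul_sum (t₁ t₂ t₃ t₄ : Finset Γ) :
    Integrable (fun ω => (∑ γ ∈ t₁, s γ ω) * (∑ γ ∈ t₂, s γ ω) * (∑ γ ∈ t₃, s γ ω)
      * (∑ γ ∈ t₄, s γ ω)) μ := by
  simp_rw [sum_mul_sum_mul_sum_mul_sum]
  exact integrable_finsetSum _ fun p _ => integrable_mul_mul_mul hs hpm _ _ _ _

variable [DecidableEq Γ]
include hmean hind

lemma integral_sum_mul_sum_mul_sum_mul_sum (t₁ t₂ t₃ t₄ : Finset Γ) :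
    ∫ ω, (∑ γ ∈ t₁, s γ ω) * (∑ γ ∈ t₂, s γ ω) * (∑ γ ∈ t₃, s γ ω) * (∑ γ ∈ t₄, s γ ω) ∂μ
      = fourPointNesting t₁ t₂ t₃ t₄ := by
  simp_rw [sum_mul_sum_mul_sum_mul_sum]
  rw [integral_finsetSum _ fun p _ => integrable_mul_mul_mul hs hpm _ _ _ _]
  simp_rw [integral_mul_mul_mul_eq_ite hs hpm hmean hind, sum_product]
  exact sum_ite_pairing_eq_fourPointNesting t₁ t₂ t₃ t₄

lemma integral_norm_sum_mul_sum_mul_sum_mul_sum_le (t₁ t₂ t₃ t₄ : Finset Γ) :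
    ∫ ω, ‖(∑ γ ∈ t₁, s γ ω) * (∑ γ ∈ t₂, s γ ω) * (∑ γ ∈ t₃, s γ ω) * (∑ γ ∈ t₄, s γ ω)‖ ∂μ
      ≤ #t₁ ^ 2 + #t₂ ^ 2 + #t₃ ^ 2 + #t₄ ^ 2 := by
  have hfourth (t : Finset Γ) : ∫ ω, (∑ γ ∈ t, s γ ω) ^ 4 ∂μ = 3 * #t ^ 2 - 2 * #t := by
    rw [← fourPointNesting_self, ← integral_sum_mul_sum_mul_sum_mul_sum hs hpm hmean hind]
    congr with ω
    ring
  have hint (t : Finset Γ) : Integrable (fun ω => (∑ γ ∈ t, s γ ω) ^ 4) μ := by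
    simpa only [pow_succ, pow_zero, one_mul] using
      integrable_sum_mul_sum_mul_sum_mul_sum hs hpm t t t t
  calc _ ≤ ∫ ω, ((∑ γ ∈ t₁, s γ ω) ^ 4 + (∑ γ ∈ t₂, s γ ω) ^ 4 + (∑ γ ∈ t₃, s γ ω) ^ 4
          + (∑ γ ∈ t₄, s γ ω) ^ 4) / 4 ∂μ :=
        integral_mono (integrable_sum_mul_sum_mul_sum_mul_sum hs hpm t₁ t₂ t₃ t₄).norm
          (((((hint t₁).add (hint t₂)).add (hint t₃)).add (hint t₄)).div_const 4)
          fun ω => abs_mul_mul_mul_le _ _ _ _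
    _ = ((3 * #t₁ ^ 2 - 2 * #t₁) + (3 * #t₂ ^ 2 - 2 * #t₂) + (3 * #t₃ ^ 2 - 2 * #t₃)
          + (3 * #t₄ ^ 2 - 2 * #t₄)) / 4 := by
        rw [integral_div, integral_add ?_ (hint t₄), integral_add ?_ (hint t₃),
          integral_add (hint t₁) (hint t₂), hfourth, hfourth, hfourth, hfourth]
        exacts [(hint t₁).add (hint t₂), ((hint t₁).add (hint t₂)).add (hint t₃)]
    _ ≤ _ := by
        have hcard (t : Finset Γ) : (0 : ℝ) ≤ #t := Nat.cast_nonneg _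
        nlinarith [hcard t₁, hcard t₂, hcard t₃, hcard t₄]

end FixedLoops

/-- In the loop-sign model, if `E[N(x_i)²] < ∞` for `i = 1,…,4`, then the
product `h(x₁)h(x₂)h(x₃)h(x₄)` is integrable and
`E[h(x₁)h(x₂)h(x₃)h(x₄)] = E[N(x₁,x₂)N(x₃,x₄) + N(x₁,x₃)N(x₂,x₄) + N(x₁,x₄)N(x₂,x₃)
  − 2 N(x₁,x₂,x₃,x₄)]`. -/
theorem loopSign_fourPoint
    {Ω : Type*} [MeasurableSpace Ω] (μ : Measure Ω) [IsProbabilityMeasure μ]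
    {Γ : Type*} [Countable Γ] [DecidableEq Γ] {X : Type*}
    (S : X → Ω → Finset Γ) (s : Γ → Ω → ℝ)
    (hSmeas : ∀ x : X, Measurable (S x))
    (hsmeas : ∀ γ : Γ, Measurable (s γ))
    (hsign : ∀ γ : Γ, μ {ω | s γ ω = 1} = 1/2 ∧ μ {ω | s γ ω = -1} = 1/2)
    (hsindep : iIndepFun s μ)
    (hSsindep : IndepFun (fun ω (x : X) => S x ω) (fun ω (γ : Γ) => s γ ω) μ)
    (x₁ x₂ x₃ x₄ : X)
    (h₁ : Integrable (fun ω => ((S x₁ ω).card : ℝ) ^ 2) μ)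
    (h₂ : Integrable (fun ω => ((S x₂ ω).card : ℝ) ^ 2) μ)
    (h₃ : Integrable (fun ω => ((S x₃ ω).card : ℝ) ^ 2) μ)
    (h₄ : Integrable (fun ω => ((S x₄ ω).card : ℝ) ^ 2) μ) :
    Integrable (fun ω => (∑ γ ∈ S x₁ ω, s γ ω) * (∑ γ ∈ S x₂ ω, s γ ω)
        * (∑ γ ∈ S x₃ ω, s γ ω) * (∑ γ ∈ S x₄ ω, s γ ω)) μ ∧
      ∫ ω, (∑ γ ∈ S x₁ ω, s γ ω) * (∑ γ ∈ S x₂ ω, s γ ω)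
          * (∑ γ ∈ S x₃ ω, s γ ω) * (∑ γ ∈ S x₄ ω, s γ ω) ∂μ
        = ∫ ω, (((S x₁ ω ∩ S x₂ ω).card : ℝ) * ((S x₃ ω ∩ S x₄ ω).card : ℝ)
            + ((S x₁ ω ∩ S x₃ ω).card : ℝ) * ((S x₂ ω ∩ S x₄ ω).card : ℝ)
            + ((S x₁ ω ∩ S x₄ ω).card : ℝ) * ((S x₂ ω ∩ S x₃ ω).card : ℝ)
            - 2 * ((S x₁ ω ∩ S x₂ ω ∩ S x₃ ω ∩ S x₄ ω).card : ℝ)) ∂μ := by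
  have hpm γ := ae_eq_one_or_eq_neg_one_of_measure_eq_half (hsmeas γ) (hsign γ).1 (hsign γ).2
  have hmean γ :=
    integral_eq_zero_of_measure_eq_half (hsmeas γ) (hpm γ) (hsign γ).1 (hsign γ).2
  have hloops : Measurable fun ω (x : X) => S x ω := measurable_pi_lambda _ hSmeas
  have hsigns : Measurable fun ω (γ : Γ) => s γ ω := measurable_pi_lambda _ hsmeas
  let F : (X → Finset Γ) × (Γ → ℝ) → ℝ := fun p => (∑ γ ∈ p.1 x₁, p.2 γ) * (∑ γ ∈ p.1 x₂, p.2 γ)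
    * (∑ γ ∈ p.1 x₃, p.2 γ) * (∑ γ ∈ p.1 x₄, p.2 γ)
  have hF : Measurable F := by
    have hfactor (x : X) : Measurable fun p : (X → Finset Γ) × (Γ → ℝ) => ∑ γ ∈ p.1 x, p.2 γ :=
      measurable_finsetSum_apply.comp (f := fun p : (X → Finset Γ) × (Γ → ℝ) => (p.1 x, p.2)) (by fun_prop)
    exact (((hfactor x₁).mul (hfactor x₂)).mul (hfactor x₃)).mul (hfactor x₄)
  have hint : Integrable (fun ω => F (fun x => S x ω, fun γ => s γ ω)) μ :=
    hSsindep.integrable_comp_of_integral_norm_le hloops hsigns hF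
      (fun a => integrable_sum_mul_sum_mul_sum_mul_sum hsmeas hpm _ _ _ _)
      (B := fun a => #(a x₁) ^ 2 + #(a x₂) ^ 2 + #(a x₃) ^ 2 + #(a x₄) ^ 2) (by fun_prop)
      (((h₁.add h₂).add h₃).add h₄)
      (fun a => integral_norm_sum_mul_sum_mul_sum_mul_sum_le hsmeas hpm hmean hsindep _ _ _ _)
  refine ⟨hint, ?_⟩
  rw [hSsindep.integral_comp_eq_integral_integral hloops hsigns hF hint]
  congr with ω
  exact integral_sum_mul_sum_mul_sum_mul_sum hsmeas hpm hmean hsindep _ _ _ _
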